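/- arXiv:0706.1484 — 2 statements merged into one kernel-verified Lean document; each statement's English description precedes it below -/
import Mathlib

section
/- Let W = {W_i}_{i∈I} be a generating sequence of closed subspaces of H. If w is an admissible weight sequence (i.e., (w_i, W_i) is a fusion frame) and a = {a_i} ∈ ℓ^∞_+(I) with inf_i a_i > 0, then a·w = {a_i w_i} is also admissible, and the fusion frames W_w and W_{aw} have equal excess. -/
noncomputable section

open scoped InnerProductSpace ENNReal

variable {H K : Type*} [NormedAddCommGroup H] [InnerProductSpace ℂ H] [CompleteSpace H]
  [NormedAddCommGroup K] [InnerProductSpace ℂ K] [CompleteSpace K]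

/-- Orthogonal projection onto (the closure of) a subspace, as an operator `H →L[ℂ] H`. -/
def sproj (M : Submodule ℂ H) : H →L[ℂ] H :=
  M.topologicalClosure.subtypeL ∘L M.topologicalClosure.orthogonalProjection

/-- The reduced minimum modulus of a bounded operator. -/
def gammaRMM (T : H →L[ℂ] K) : ℝ :=
  sInf ((fun x => ‖T x‖) '' {x : H | x ∈ (LinearMap.ker (T : H →ₗ[ℂ] K))ᗮ ∧ ‖x‖ = 1})

/-- `M ⊖ N`. -/
def ominus (M N : Submodule ℂ H) : Submodule ℂ H := M ⊓ (M ⊓ N)ᗮ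

open Classical in
/-- The cosine of the Friedrichs angle between two subspaces. -/
def angleCos (M N : Submodule ℂ H) : ℝ :=
  if M ≤ N ∨ N ≤ M then 0
  else sSup {r : ℝ | ∃ x ∈ ominus M N, ∃ y ∈ ominus N M,
    ‖x‖ = 1 ∧ ‖y‖ = 1 ∧ r = ‖(inner ℂ x y : ℂ)‖}

/-- The sine of the Friedrichs angle. -/
def angleSin (M N : Submodule ℂ H) : ℝ := Real.sqrt (1 - angleCos M N ^ 2)

variable {I : Type*}

/-- `(w i, W i)` is a fusion frame (frame of subspaces) with bounds `A`, `B`. -/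
def IsFusionFrameWith (w : I → ℝ) (W : I → Submodule ℂ H) (A B : ℝ) : Prop :=
  0 < A ∧ 0 < B ∧ (∀ i, IsClosed (W i : Set H)) ∧
    ∀ f : H, A * ‖f‖ ^ 2 ≤ ∑' i, w i ^ 2 * ‖sproj (W i) f‖ ^ 2 ∧
      ∑' i, w i ^ 2 * ‖sproj (W i) f‖ ^ 2 ≤ B * ‖f‖ ^ 2

/-- `(w i, W i)` is a fusion frame for some bounds. -/
def IsFusionFrame (w : I → ℝ) (W : I → Submodule ℂ H) : Prop :=
  ∃ A B : ℝ, IsFusionFrameWith w W A B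

/-- a family of mutually orthogonal closed subspaces with dense span. -/
def IsOBS (E : I → Submodule ℂ H) : Prop :=
  (∀ i, IsClosed (E i : Set H)) ∧
  (∀ i j, i ≠ j → ∀ x ∈ E i, ∀ y ∈ E j, (inner ℂ x y : ℂ) = 0) ∧
  (⨆ i, E i).topologicalClosure = ⊤

/-- A minimal sequence of subspaces. -/
def IsMinimal (W : I → Submodule ℂ H) : Prop :=
  ∀ i, W i ⊓ (⨆ j ∈ {j : I | j ≠ i}, W j).topologicalClosure = ⊥

/-- The kernel of the synthesis operator of `(w i, W i)`, as a subspace of `⊕₂ W i`. -/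
def synthesisKernel (w : I → ℝ) (W : I → Submodule ℂ H) :
    Submodule ℂ (lp (fun i => W i) 2) where
  carrier := {g | ∀ f : H, HasSum (fun i => (w i : ℂ) * (inner ℂ ((g i : H)) f : ℂ)) 0}
  zero_mem' := by
    intro f
    have : (fun i => (w i : ℂ) * (inner ℂ (((0 : lp (fun i => W i) 2) i : H)) f : ℂ)) =
        fun _ => 0 := by
      funext i; simp [lp.coeFn_zero]
    rw [this]; exact hasSum_zero
  add_mem' := by
    intro a b ha hb f
    have h := (ha f).add (hb f)
    rw [add_zero] at h
    have he : (fun i => (w i : ℂ) * (inner ℂ (((a + b) i : H)) f : ℂ)) =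
        fun i => (w i : ℂ) * (inner ℂ ((a i : H)) f : ℂ) +
          (w i : ℂ) * (inner ℂ ((b i : H)) f : ℂ) := by
      funext i
      have h2 : ((a + b) i : ↥(W i)) = a i + b i := by rw [lp.coeFn_add]; rfl
      rw [h2, Submodule.coe_add, inner_add_left]; ring
    rw [he]; exact h
  smul_mem' := by
    intro c a ha f
    have h := (ha f).mul_left (starRingEnd ℂ c)
    rw [mul_zero] at h
    have he : (fun i => (w i : ℂ) * (inner ℂ (((c • a) i : H)) f : ℂ)) =
        fun i => (starRingEnd ℂ c) * ((w i : ℂ) * (inner ℂ ((a i : H)) f : ℂ)) := by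
      funext i
      have h2 : ((c • a) i : ↥(W i)) = c • a i := by rw [lp.coeFn_smul]; rfl
      rw [h2, Submodule.coe_smul, inner_smul_left]; ring
    rw [he]; exact h

/-- The excess of a fusion frame. -/
def fusionExcess (w : I → ℝ) (W : I → Submodule ℂ H) : Cardinal :=
  Module.rank ℂ (synthesisKernel w W)

/-!
Multiplying the weights by a sequence `a` with `c ≤ |aᵢ| ≤ M` multiplies every term of the frame
series by a factor in `[c², M²]`, so the frame bounds only rescale. For the excess, the diagonal
operator `(gᵢ) ↦ (aᵢ gᵢ)` is a linear automorphism of `⊕₂ Wᵢ` (its inverse is the diagonal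
operator of `a⁻¹`), and it pulls `ker T_{W_w}` back to `ker T_{W_{aw}}`.
-/

theorem Memℓp.smul_of_norm_le {α 𝕜 : Type*} {E : α → Type*} [NormedField 𝕜]
    [∀ i, NormedAddCommGroup (E i)] [∀ i, NormedSpace 𝕜 (E i)] {p : ℝ≥0∞} {f : ∀ i, E i}
    (hf : Memℓp f p) {a : α → 𝕜} {M : ℝ} (haM : ∀ i, ‖a i‖ ≤ M) :
    Memℓp (fun i => a i • f i) p :=
  (hf.norm.const_mul M).mono fun i =>
    (norm_smul_le _ _).trans (mul_le_mul_of_nonneg_right (haM i) (norm_nonneg _))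

namespace lp

variable {α 𝕜 : Type*} {E : α → Type*} [NormedField 𝕜] [∀ i, NormedAddCommGroup (E i)]
  [∀ i, NormedSpace 𝕜 (E i)] {p : ℝ≥0∞}

def diagSMul (a : α → 𝕜) {M : ℝ} (haM : ∀ i, ‖a i‖ ≤ M) : lp E p →ₗ[𝕜] lp E p where
  toFun g := ⟨fun i => a i • g i, (lp.memℓp g).smul_of_norm_le haM⟩
  map_add' g h := lp.ext <| funext fun i => smul_add (a i) (g i) (h i)
  map_smul' c g := lp.ext <| funext fun i => smul_comm (a i) c (g i)

def diagSMulEquiv (a : α → 𝕜) {c M : ℝ} (hc : 0 < c) (hca : ∀ i, c ≤ ‖a i‖)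
    (haM : ∀ i, ‖a i‖ ≤ M) : lp E p ≃ₗ[𝕜] lp E p :=
  have ha0 : ∀ i, a i ≠ 0 := fun i => norm_pos_iff.mp (hc.trans_le (hca i))
  { diagSMul a haM with
    invFun := diagSMul (fun i => (a i)⁻¹) fun i => by
      rw [norm_inv]
      exact inv_anti₀ hc (hca i)
    left_inv := fun g => lp.ext <| funext fun i => inv_smul_smul₀ (ha0 i) (g i)
    right_inv := fun g => lp.ext <| funext fun i => smul_inv_smul₀ (ha0 i) (g i) }

@[simp]
theorem diagSMulEquiv_apply (a : α → 𝕜) {c M : ℝ} (hc : 0 < c) (hca : ∀ i, c ≤ ‖a i‖)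
    (haM : ∀ i, ‖a i‖ ≤ M) (g : lp E p) (i : α) :
    diagSMulEquiv a hc hca haM g i = a i • g i :=
  rfl

end lp

namespace IsFusionFrameWith

variable {W : I → Submodule ℂ H} {w : I → ℝ} {A B : ℝ}

theorem summable (h : IsFusionFrameWith w W A B) (f : H) :
    Summable fun i => w i ^ 2 * ‖sproj (W i) f‖ ^ 2 := by
  by_contra hs
  -- a divergent series has `tsum` zero, so the lower frame bound forces `f = 0`
  have hf : f = 0 := by
    have hlow := (h.2.2.2 f).1
    rw [tsum_eq_zero_of_not_summable hs] at hlow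
    have : ‖f‖ ^ 2 ≤ 0 := nonpos_of_mul_nonpos_right hlow h.1
    simpa using this
  subst hf
  simp at hs

theorem mul_weight (h : IsFusionFrameWith w W A B) {a : I → ℝ} {c M : ℝ} (hc : 0 < c)
    (hM : 0 < M) (hca : ∀ i, c ≤ |a i|) (haM : ∀ i, |a i| ≤ M) :
    IsFusionFrameWith (fun i => a i * w i) W (c ^ 2 * A) (M ^ 2 * B) := by
  refine ⟨by have := h.1; positivity, by have := h.2.1; positivity, h.2.2.1, fun f => ?_⟩
  set S := fun i => w i ^ 2 * ‖sproj (W i) f‖ ^ 2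
  have hS : Summable S := h.summable f
  have hS0 : ∀ i, 0 ≤ S i := fun i => by positivity
  have hterm : (fun i => (a i * w i) ^ 2 * ‖sproj (W i) f‖ ^ 2) = fun i => a i ^ 2 * S i :=
    funext fun i => by ring
  have hlow : ∀ i, c ^ 2 * S i ≤ a i ^ 2 * S i := fun i =>
    mul_le_mul_of_nonneg_right (by simpa only [sq_abs] using pow_le_pow_left₀ hc.le (hca i) 2)
      (hS0 i)
  have hup : ∀ i, a i ^ 2 * S i ≤ M ^ 2 * S i := fun i =>
    mul_le_mul_of_nonneg_right
      (by simpa only [sq_abs] using pow_le_pow_left₀ (abs_nonneg _) (haM i) 2) (hS0 i)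
  have haS : Summable fun i => a i ^ 2 * S i :=
    (hS.mul_left _).of_nonneg_of_le (fun i => by positivity) hup
  rw [hterm]
  constructor
  · calc c ^ 2 * A * ‖f‖ ^ 2 = c ^ 2 * (A * ‖f‖ ^ 2) := by ring
      _ ≤ c ^ 2 * ∑' i, S i := by gcongr; exact (h.2.2.2 f).1
      _ = ∑' i, c ^ 2 * S i := tsum_mul_left.symm
      _ ≤ ∑' i, a i ^ 2 * S i := (hS.mul_left _).tsum_le_tsum hlow haS
  · calc ∑' i, a i ^ 2 * S i ≤ ∑' i, M ^ 2 * S i := haS.tsum_le_tsum hup (hS.mul_left _)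
      _ = M ^ 2 * ∑' i, S i := tsum_mul_left
      _ ≤ M ^ 2 * (B * ‖f‖ ^ 2) := by gcongr; exact (h.2.2.2 f).2
      _ = M ^ 2 * B * ‖f‖ ^ 2 := by ring

end IsFusionFrameWith

section SynthesisKernel

variable {V : Type*} [NormedAddCommGroup V] [InnerProductSpace ℂ V]
  {W : I → Submodule ℂ V} {w a : I → ℝ} {c M : ℝ}

theorem mem_synthesisKernel_iff {g : lp (fun i => W i) 2} :
    g ∈ synthesisKernel w W ↔
      ∀ f : V, HasSum (fun i => (w i : ℂ) * (inner ℂ ((g i : V)) f : ℂ)) 0 :=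
  Iff.rfl

theorem synthesisKernel_mul_eq_comap (hc : 0 < c) (hca : ∀ i, c ≤ |a i|) (haM : ∀ i, |a i| ≤ M) :
    synthesisKernel (fun i => a i * w i) W =
      (synthesisKernel w W).comap
        (lp.diagSMulEquiv (E := fun i => W i) (p := 2) (fun i => (a i : ℂ)) hc
          (by simpa using hca) (by simpa using haM)).toLinearMap := by
  ext g
  simp only [Submodule.mem_comap, LinearEquiv.coe_coe, mem_synthesisKernel_iff,
    lp.diagSMulEquiv_apply, Submodule.coe_smul, inner_smul_left, Complex.conj_ofReal]
  refine forall_congr' fun f => ?_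
  congr! 2 with i
  push_cast
  ring

theorem fusionExcess_mul (hc : 0 < c) (hca : ∀ i, c ≤ |a i|) (haM : ∀ i, |a i| ≤ M) :
    fusionExcess (fun i => a i * w i) W = fusionExcess w W := by
  rw [fusionExcess, synthesisKernel_mul_eq_comap hc hca haM, Submodule.comap_equiv_eq_map_symm]
  exact (LinearEquiv.submoduleMap _ _).rank_eq.symm

end SynthesisKernel

theorem admissible_weight_mul_general {I : Type*} (W : I → Submodule ℂ H)
    (w : I → ℝ) (hFS : IsFusionFrame w W)
    (a : I → ℝ) (hab : BddAbove (Set.range a))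
    (hainf : ∃ c > 0, ∀ i, c ≤ a i) :
    IsFusionFrame (fun i => a i * w i) W ∧
    fusionExcess (fun i => a i * w i) W = fusionExcess w W := by
  obtain ⟨c, hc, hca⟩ := hainf
  obtain ⟨M, hcM, hM⟩ := hab.exists_ge c
  obtain ⟨A, B, hAB⟩ := hFS
  have hca' : ∀ i, c ≤ |a i| := fun i => (hca i).trans (le_abs_self _)
  have haM : ∀ i, |a i| ≤ M := fun i => by
    rw [abs_of_pos (hc.trans_le (hca i))]
    exact hM _ ⟨i, rfl⟩
  exact ⟨⟨_, _, hAB.mul_weight hc (hc.trans_le hcM) hca' haM⟩, fusionExcess_mul hc hca' haM⟩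

theorem admissible_weight_mul {I : Type*} (W : I → Submodule ℂ H)
    (hgen : (⨆ i, W i).topologicalClosure = ⊤)
    (w : I → ℝ) (hw : ∀ i, 0 < w i) (hwb : BddAbove (Set.range w))
    (hFS : IsFusionFrame w W)
    (a : I → ℝ) (ha : ∀ i, 0 < a i) (hab : BddAbove (Set.range a))
    (hainf : ∃ c > 0, ∀ i, c ≤ a i) :
    IsFusionFrame (fun i => a i * w i) W ∧
    fusionExcess (fun i => a i * w i) W = fusionExcess w W :=
  admissible_weight_mul_general W w hFS a hab hainf

end
end

section
/- If W = {W_i}_{i∈I} is a Riesz basis of subspaces for H with frame operator S_{W_w} (for weights w bounded away from 0 and ∞), then the subspaces {S_{W_w}^{-1/2} W_i}_{i∈I} form an orthonormal basis of subspaces of H. -/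
noncomputable section

open scoped InnerProductSpace ENNReal

variable {H K : Type*} [NormedAddCommGroup H] [InnerProductSpace ℂ H] [CompleteSpace H]
  [NormedAddCommGroup K] [InnerProductSpace ℂ K] [CompleteSpace K]

variable {I : Type*}

/-!
Write `P k` for the projection onto `W k`; the hypothesis on `R` says
`∑ k, w k ^ 2 • P k (R (R f)) = f`. For `x ∈ W i` this is an expansion of `x` along the minimal
family `W`, and such expansions are unique, so `w k ^ 2 • P k (R (R x))` is `x` for `k = i` and `0`
otherwise. Pairing with the self-adjoint `R` gives `‖x‖ = |w i| * ‖R x‖`, so `R` is bounded below on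
`W i` and `R (W i)` is closed, and `⟪R a, R b⟫ = 0` for `a ∈ W i`, `b ∈ W j`, `i ≠ j`. Finally, if
`f ⊥ R (W i)` for all `i`, then `R f ⊥ ⨆ i, W i`, which is dense, so `R f = 0` and
`f = ∑ k, w k ^ 2 • P k (R (R f)) = 0`.
-/

open scoped NNReal

theorem Submodule.mem_topologicalClosure_of_hasSum {R M ι : Type*} [Semiring R]
    [AddCommMonoid M] [TopologicalSpace M] [Module R M] [ContinuousAdd M] [ContinuousConstSMul R M]
    {s : Submodule R M} {g : ι → M} {a : M} (hg : HasSum g a) (hs : ∀ i, g i ∈ s) :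
    a ∈ s.topologicalClosure :=
  mem_closure_of_tendsto hg <|
    Filter.Eventually.of_forall fun _ => Submodule.sum_mem _ fun i _ => hs i

theorem Submodule.topologicalClosure_iSup_eq_top_of_hasSum {R M ι : Type*} [Semiring R]
    [AddCommMonoid M] [TopologicalSpace M] [Module R M] [ContinuousAdd M] [ContinuousConstSMul R M]
    {W : ι → Submodule R M} (h : ∀ f, ∃ g : ι → M, (∀ i, g i ∈ W i) ∧ HasSum g f) :
    (⨆ i, W i).topologicalClosure = ⊤ := by
  refine eq_top_iff.mpr fun f _ => ?_
  obtain ⟨g, hgW, hg⟩ := h f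
  exact mem_topologicalClosure_of_hasSum hg fun i => Submodule.mem_iSup_of_mem i (hgW i)

theorem Submodule.isClosed_map_of_norm_le {𝕜 E F : Type*} [NontriviallyNormedField 𝕜]
    [NormedAddCommGroup E] [NormedSpace 𝕜 E] [CompleteSpace E]
    [NormedAddCommGroup F] [NormedSpace 𝕜 F]
    {M : Submodule 𝕜 E} (hM : IsClosed (M : Set E)) (T : E →L[𝕜] F) (C : ℝ≥0)
    (hT : ∀ x ∈ M, ‖x‖ ≤ C * ‖T x‖) : IsClosed (M.map (T : E →ₗ[𝕜] F) : Set F) := by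
  have := hM.completeSpace_coe
  have hanti := (T ∘L M.subtypeL).antilipschitz_of_bound fun x => hT x x.2
  convert hanti.isClosed_range (T ∘L M.subtypeL).uniformContinuous using 1
  ext y
  simp

section sproj

variable (M : Submodule ℂ H)

theorem sproj_apply_mem (hM : IsClosed (M : Set H)) (u : H) : sproj M u ∈ M := by
  have h : sproj M u ∈ M.topologicalClosure := M.topologicalClosure.starProjection_apply_mem u
  rwa [hM.submodule_topologicalClosure_eq] at h

theorem sproj_apply_of_mem {x : H} (hx : x ∈ M) : sproj M x = x :=
  Submodule.starProjection_eq_self_iff.mpr (M.le_topologicalClosure hx)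

theorem inner_sproj_left_eq_right (u v : H) : ⟪sproj M u, v⟫_ℂ = ⟪u, sproj M v⟫_ℂ :=
  M.topologicalClosure.inner_starProjection_left_eq_right u v

end sproj

section Minimal

variable {E ι : Type*} [NormedAddCommGroup E] [InnerProductSpace ℂ E]
  {W : ι → Submodule ℂ E} {g : ι → E}

theorem IsMinimal.eq_zero_of_hasSum_zero (hmin : IsMinimal W) (hg : ∀ i, g i ∈ W i)
    (hs : HasSum g 0) (j : ι) : g j = 0 := by
  classical
  have hrest : -g j ∈ (⨆ k ∈ {k : ι | k ≠ j}, W k).topologicalClosure := by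
    refine Submodule.mem_topologicalClosure_of_hasSum (g := Function.update g j 0)
      (by simpa using hs.update j 0) fun k => ?_
    rcases eq_or_ne k j with rfl | hk
    · simp
    · rw [Function.update_of_ne hk]
      exact Submodule.mem_iSup_of_mem k (Submodule.mem_iSup_of_mem hk (hg k))
  have hmem : g j ∈ W j ⊓ (⨆ k ∈ {k : ι | k ≠ j}, W k).topologicalClosure :=
    ⟨hg j, neg_neg (g j) ▸ neg_mem hrest⟩
  rwa [hmin j, Submodule.mem_bot] at hmem

theorem IsMinimal.eq_pi_single_of_hasSum [DecidableEq ι] (hmin : IsMinimal W)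
    (hg : ∀ i, g i ∈ W i) {i : ι} {x : E} (hx : x ∈ W i) (hs : HasSum g x) :
    g = Pi.single i x := by
  funext j
  refine sub_eq_zero.mp (hmin.eq_zero_of_hasSum_zero (g := g - Pi.single i x) (fun k => ?_)
    (by rw [← sub_self x]; exact hs.sub (hasSum_pi_single i x)) j)
  rcases eq_or_ne k i with rfl | hk
  · simpa using Submodule.sub_mem _ (hg k) hx
  · simpa [hk] using hg k

end Minimal

section ReconstructionOperator

variable {ι : Type*} {W : ι → Submodule ℂ H} {w : ι → ℝ} {R : H →L[ℂ] H}

theorem smul_sproj_eq_pi_single [DecidableEq ι] (hclosed : ∀ i, IsClosed (W i : Set H))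
    (hmin : IsMinimal W)
    (hR : ∀ f : H, HasSum (fun i => (w i ^ 2 : ℝ) • sproj (W i) (R (R f))) f)
    {i : ι} {x : H} (hx : x ∈ W i) :
    (fun k => (w k ^ 2 : ℝ) • sproj (W k) (R (R x))) = Pi.single i x :=
  hmin.eq_pi_single_of_hasSum
    (fun k => Submodule.smul_of_tower_mem _ _ (sproj_apply_mem _ (hclosed k) _)) hx (hR x)

theorem norm_eq_abs_mul_norm_of_mem (hRsa : IsSelfAdjoint R)
    (hclosed : ∀ i, IsClosed (W i : Set H)) (hmin : IsMinimal W)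
    (hR : ∀ f : H, HasSum (fun i => (w i ^ 2 : ℝ) • sproj (W i) (R (R f))) f)
    {i : ι} {x : H} (hx : x ∈ W i) : ‖x‖ = |w i| * ‖R x‖ := by
  classical
  have hx' : (w i ^ 2 : ℝ) • sproj (W i) (R (R x)) = x := by
    simpa using congr_fun (smul_sproj_eq_pi_single hclosed hmin hR hx) i
  have hinner : ⟪x, x⟫_ℂ = (w i ^ 2 : ℝ) • ⟪R x, R x⟫_ℂ :=
    calc ⟪x, x⟫_ℂ = ⟪(w i ^ 2 : ℝ) • sproj (W i) (R (R x)), x⟫_ℂ := by rw [hx']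
      _ = (w i ^ 2 : ℝ) • ⟪R (R x), sproj (W i) x⟫_ℂ := by
        rw [RCLike.real_smul_eq_coe_smul (K := ℂ), inner_smul_real_left,
          inner_sproj_left_eq_right]
      _ = (w i ^ 2 : ℝ) • ⟪R x, R x⟫_ℂ := by
        rw [sproj_apply_of_mem _ hx, hRsa.isSymmetric.apply_clm]
  have hsq : ‖x‖ ^ 2 = (|w i| * ‖R x‖) ^ 2 :=
    calc ‖x‖ ^ 2 = RCLike.re ⟪x, x⟫_ℂ := (inner_self_eq_norm_sq x).symm
      _ = w i ^ 2 * RCLike.re ⟪R x, R x⟫_ℂ := by rw [hinner, RCLike.smul_re]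
      _ = (|w i| * ‖R x‖) ^ 2 := by rw [inner_self_eq_norm_sq, mul_pow, sq_abs]
  exact (pow_left_inj₀ (norm_nonneg _) (by positivity) two_ne_zero).mp hsq

theorem isClosed_map_of_isMinimal (hRsa : IsSelfAdjoint R)
    (hclosed : ∀ i, IsClosed (W i : Set H)) (hmin : IsMinimal W)
    (hR : ∀ f : H, HasSum (fun i => (w i ^ 2 : ℝ) • sproj (W i) (R (R f))) f) (i : ι) :
    IsClosed ((W i).map (R : H →ₗ[ℂ] H) : Set H) :=
  Submodule.isClosed_map_of_norm_le (hclosed i) R ‖w i‖₊ fun x hx => by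
    simpa [Real.norm_eq_abs] using (norm_eq_abs_mul_norm_of_mem hRsa hclosed hmin hR hx).le

theorem inner_apply_eq_zero_of_ne (hRsa : IsSelfAdjoint R)
    (hclosed : ∀ i, IsClosed (W i : Set H)) (hmin : IsMinimal W)
    (hR : ∀ f : H, HasSum (fun i => (w i ^ 2 : ℝ) • sproj (W i) (R (R f))) f)
    {i j : ι} (hij : i ≠ j) {a b : H} (ha : a ∈ W i) (hb : b ∈ W j) :
    ⟪R a, R b⟫_ℂ = 0 := by
  classical
  have hPa : (w j ^ 2 : ℝ) • sproj (W j) (R (R a)) = 0 := by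
    simpa [hij.symm] using congr_fun (smul_sproj_eq_pi_single hclosed hmin hR ha) j
  have hb' : (w j ^ 2 : ℝ) • sproj (W j) (R (R b)) = b := by
    simpa using congr_fun (smul_sproj_eq_pi_single hclosed hmin hR hb) j
  calc ⟪R a, R b⟫_ℂ = ⟪R (R a), b⟫_ℂ := (hRsa.isSymmetric _ _).symm
    _ = ⟪R (R a), (w j ^ 2 : ℝ) • sproj (W j) (R (R b))⟫_ℂ := by rw [hb']
    _ = ⟪(w j ^ 2 : ℝ) • sproj (W j) (R (R a)), R (R b)⟫_ℂ := by
      rw [RCLike.real_smul_eq_coe_smul (K := ℂ), RCLike.real_smul_eq_coe_smul (K := ℂ),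
        inner_smul_real_right, inner_smul_real_left, inner_sproj_left_eq_right]
    _ = 0 := by rw [hPa, inner_zero_left]

theorem topologicalClosure_iSup_map_eq_top (hRsa : IsSelfAdjoint R)
    (hclosed : ∀ i, IsClosed (W i : Set H))
    (hR : ∀ f : H, HasSum (fun i => (w i ^ 2 : ℝ) • sproj (W i) (R (R f))) f) :
    (⨆ i, (W i).map (R : H →ₗ[ℂ] H)).topologicalClosure = ⊤ := by
  have hW : (⨆ i, W i)ᗮ = ⊥ := Submodule.topologicalClosure_eq_top_iff.mp <|
    Submodule.topologicalClosure_iSup_eq_top_of_hasSum fun f =>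
      ⟨_, fun i => Submodule.smul_of_tower_mem _ _ (sproj_apply_mem _ (hclosed i) _), hR f⟩
  rw [Submodule.topologicalClosure_eq_top_iff, Submodule.eq_bot_iff]
  intro f hf
  have hRf : R f ∈ (⨆ i, W i)ᗮ := by
    rw [← Submodule.iInf_orthogonal]
    refine Submodule.mem_iInf _ |>.mpr fun i => (Submodule.mem_orthogonal _ _).mpr fun a ha => ?_
    rw [← hRsa.isSymmetric.apply_clm]
    exact hf (R a) (Submodule.mem_iSup_of_mem i ⟨a, ha, rfl⟩)
  rw [hW, Submodule.mem_bot] at hRf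
  have hsum := hR f
  simp only [hRf, map_zero, smul_zero] at hsum
  exact hsum.unique hasSum_zero

end ReconstructionOperator

theorem OBS_of_RBS_inv_sqrt_frameOp_general {I : Type*} (W : I → Submodule ℂ H)
    (w : I → ℝ)
    (hFS : IsFusionFrame w W) (hmin : IsMinimal W)
    (R : H →L[ℂ] H) (hRsa : IsSelfAdjoint R)
    (hR : ∀ f : H, HasSum (fun i => (w i ^ 2 : ℝ) • sproj (W i) (R (R f))) f) :
    IsOBS (fun i => (W i).map (R : H →ₗ[ℂ] H)) := by
  obtain ⟨_, _, -, -, hclosed, -⟩ := hFS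
  refine ⟨isClosed_map_of_isMinimal hRsa hclosed hmin hR, ?_,
    topologicalClosure_iSup_map_eq_top hRsa hclosed hR⟩
  rintro i j hij _ ⟨a, ha, rfl⟩ _ ⟨b, hb, rfl⟩
  exact inner_apply_eq_zero_of_ne hRsa hclosed hmin hR hij ha hb

theorem OBS_of_RBS_inv_sqrt_frameOp {I : Type*} (W : I → Submodule ℂ H)
    (w : I → ℝ) (hw : ∀ i, 0 < w i) (hwb : BddAbove (Set.range w))
    (hwinf : ∃ c > 0, ∀ i, c ≤ w i)
    (hFS : IsFusionFrame w W) (hmin : IsMinimal W)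
    (R : H →L[ℂ] H) (hRsa : IsSelfAdjoint R)
    (hRpos : ∀ f : H, 0 ≤ (inner ℂ (R f) f : ℂ).re)
    (hR : ∀ f : H, HasSum (fun i => (w i ^ 2 : ℝ) • sproj (W i) (R (R f))) f) :
    IsOBS (fun i => (W i).map (R : H →ₗ[ℂ] H)) :=
  OBS_of_RBS_inv_sqrt_frameOp_general W w hFS hmin R hRsa hR

end
end
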